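/- For linear demand v(p) = a − b·p with a, b > 0, and positive continuous discount function φ on [0,T], the stationarity condition φ(t)·v(p(t)) + (φ(t)·p(t) + q)·v'(p(t)) = 0 together with the sales constraint ∫₀ᵀ v(p(t)) dt = Sₗ is uniquely solved by p(t) = (1/2)·(a/b − q/φ(t)) with q = (2Sₗ − aT)/(b·∫₀ᵀ dt/φ(t)). -/

import Mathlib

/-!
Stationarity is linear in the price, so it forces `p(t) = (a/b − q/φ(t))/2` pointwise. Substituting,
the demand becomes `a/2 + (b q/2)/φ(t)`, so the sales constraint reads `a T/2 + (b q/2) I = Sₗ` with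
`I = ∫₀ᵀ dt/φ(t) > 0`, which determines `q`.
-/

open MeasureTheory

theorem linear_demand_price_eq_of_stationary {a b q φ p : ℝ} (hb : b ≠ 0) (hφ : φ ≠ 0)
    (hstat : φ * (a - b * p) + (φ * p + q) * (-b) = 0) :
    p = (1/2) * (a / b - q / φ) := by
  field_simp
  linear_combination -hstat

theorem linear_demand_eq_of_price_eq {a b q φ p : ℝ} (hb : b ≠ 0) (hφ : φ ≠ 0)
    (hp : p = (1/2) * (a / b - q / φ)) :
    a - b * p = a / 2 + b * q / 2 * (1 / φ) := by
  subst hp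
  field_simp
  ring

section

variable {φ : ℝ → ℝ} {T : ℝ}

theorem intervalIntegrable_one_div (hT : 0 ≤ T) (hφc : ContinuousOn φ (Set.Icc 0 T))
    (hφ : ∀ t ∈ Set.Icc 0 T, φ t ≠ 0) : IntervalIntegrable (fun t => 1 / φ t) volume 0 T :=
  (continuousOn_const.div hφc hφ).intervalIntegrable_of_Icc hT

theorem intervalIntegral_one_div_pos (hT : 0 < T) (hφc : ContinuousOn φ (Set.Icc 0 T))
    (hφ : ∀ t ∈ Set.Icc 0 T, 0 < φ t) : 0 < ∫ t in (0:ℝ)..T, 1 / φ t :=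
  intervalIntegral.intervalIntegral_pos_of_pos_on
    (intervalIntegrable_one_div hT.le hφc fun t ht => (hφ t ht).ne')
    (fun t ht => one_div_pos.2 (hφ t (Set.Ioo_subset_Icc_self ht))) hT

end

theorem linear_demand_closed_form_general
    (T Sl a b q : ℝ) (hT : 0 < T) (hb : 0 < b)
    (φ : ℝ → ℝ) (hφc : ContinuousOn φ (Set.Icc 0 T))
    (hφ : ∀ t ∈ Set.Icc (0:ℝ) T, 0 < φ t)
    (p : ℝ → ℝ)
    (hstat : ∀ t ∈ Set.Icc (0:ℝ) T,
      φ t * (a - b * p t) + (φ t * p t + q) * (-b) = 0)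
    (hsales : ∫ t in (0:ℝ)..T, (a - b * p t) = Sl) :
    (∀ t ∈ Set.Icc (0:ℝ) T, p t = (1/2) * (a / b - q / φ t)) ∧
    q = (2 * Sl - a * T) / (b * ∫ t in (0:ℝ)..T, 1 / φ t) := by
  have hp : ∀ t ∈ Set.Icc (0:ℝ) T, p t = (1/2) * (a / b - q / φ t) := fun t ht =>
    linear_demand_price_eq_of_stationary hb.ne' (hφ t ht).ne' (hstat t ht)
  refine ⟨hp, ?_⟩
  have hI := intervalIntegral_one_div_pos hT hφc hφ
  have hint := intervalIntegrable_one_div hT.le hφc fun t ht => (hφ t ht).ne'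
  have hdemand : ∫ t in (0:ℝ)..T, (a - b * p t)
      = ∫ t in (0:ℝ)..T, (a / 2 + b * q / 2 * (1 / φ t)) := by
    refine intervalIntegral.integral_congr fun t ht => ?_
    rw [Set.uIcc_of_le hT.le] at ht
    exact linear_demand_eq_of_price_eq hb.ne' (hφ t ht).ne' (hp t ht)
  rw [hdemand, intervalIntegral.integral_add intervalIntegrable_const (hint.const_mul _),
    intervalIntegral.integral_const, intervalIntegral.integral_const_mul] at hsales
  rw [eq_div_iff (by positivity), ← hsales, smul_eq_mul]
  ring

/-- Closed-form solution with linear demand `v(p) = a − b·p`: the stationarity condition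
together with the final sales constraint is uniquely solved by
`p(t) = (1/2)(a/b − q/φ(t))` with `q = (2Sₗ − aT)/(b·∫₀ᵀ dt/φ(t))`. -/
theorem linear_demand_closed_form
    (T Sl a b q : ℝ) (hT : 0 < T) (ha : 0 < a) (hb : 0 < b)
    (φ : ℝ → ℝ) (hφc : ContinuousOn φ (Set.Icc 0 T))
    (hφ : ∀ t ∈ Set.Icc (0:ℝ) T, 0 < φ t)
    (p : ℝ → ℝ)
    (hstat : ∀ t ∈ Set.Icc (0:ℝ) T,
      φ t * (a - b * p t) + (φ t * p t + q) * (-b) = 0)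
    (hsales : ∫ t in (0:ℝ)..T, (a - b * p t) = Sl) :
    (∀ t ∈ Set.Icc (0:ℝ) T, p t = (1/2) * (a / b - q / φ t)) ∧
    q = (2 * Sl - a * T) / (b * ∫ t in (0:ℝ)..T, 1 / φ t) :=
  linear_demand_closed_form_general T Sl a b q hT hb φ hφc hφ p hstat hsales
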